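/- A biframe homomorphism f : L → M is an extremal epimorphism in BiFrm if and only if both restrictions f₁ : L₁ → M₁ and f₂ : L₂ → M₂ are surjective and the underlying frame homomorphism f₀ : L₀ → M₀ is the pushout in Frm of f₁ ⊕ f₂ along the canonical quotient map q_L : L₁ ⊕ L₂ → L₀. -/

import Mathlib

/-! Basic category-style notions for frames and biframes. -/

/-- `(K, i1, i2)` is a coproduct of the frames `L1` and `L2` in the category of frames. -/
def IsCoprod {L1 L2 K : Type} [Order.Frame L1] [Order.Frame L2] [Order.Frame K]
    (i1 : FrameHom L1 K) (i2 : FrameHom L2 K) : Prop :=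
  ∀ (Q : Type) [Order.Frame Q], ∀ (h1 : FrameHom L1 Q) (h2 : FrameHom L2 Q),
    ∃! k : FrameHom K Q, k.comp i1 = h1 ∧ k.comp i2 = h2

/-- `f' : C → P` (the pushout of `f` along `g`) and `g' : B → P` form a pushout square over
`f : A → B` and `g : A → C` in the category of frames. -/
def IsPushoutSquare {A B C P : Type} [Order.Frame A] [Order.Frame B] [Order.Frame C]
    [Order.Frame P] (f : FrameHom A B) (g : FrameHom A C)
    (f' : FrameHom C P) (g' : FrameHom B P) : Prop :=
  g'.comp f = f'.comp g ∧
    ∀ (Q : Type) [Order.Frame Q], ∀ (u : FrameHom B Q) (v : FrameHom C Q),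
      u.comp f = v.comp g → ∃! k : FrameHom P Q, k.comp g' = u ∧ k.comp f' = v

/-- A biframe `(L₀, L₁, L₂)`: an ambient frame `L₀` together with two component frames
`L₁, L₂` embedded in it by frame homomorphisms `e1, e2` (so the images are subframes),
such that the union of the images is a subbasis of `L₀`: every element of `L₀` is a join
of finite meets `e1 a ⊓ e2 b` of elements coming from the two components. -/
structure Biframe where
  L0 : Type
  L1 : Type
  L2 : Type
  [fr0 : Order.Frame L0]
  [fr1 : Order.Frame L1]
  [fr2 : Order.Frame L2]
  e1 : FrameHom L1 L0
  e2 : FrameHom L2 L0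
  inj1 : Function.Injective e1
  inj2 : Function.Injective e2
  gen : ∀ x : L0, ∃ A : Set (L1 × L2), x = sSup ((fun p => e1 p.1 ⊓ e2 p.2) '' A)

attribute [instance] Biframe.fr0 Biframe.fr1 Biframe.fr2

/-- A biframe homomorphism: a frame homomorphism of the ambient frames restricting to frame
homomorphisms of the component frames. -/
@[ext]
structure BiframeHom (L M : Biframe) where
  h0 : FrameHom L.L0 M.L0
  h1 : FrameHom L.L1 M.L1
  h2 : FrameHom L.L2 M.L2
  comm1 : h0.comp L.e1 = M.e1.comp h1
  comm2 : h0.comp L.e2 = M.e2.comp h2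

/-- Composition of biframe homomorphisms. -/
def BiframeHom.comp {L M N : Biframe} (g : BiframeHom M N) (f : BiframeHom L M) :
    BiframeHom L N where
  h0 := g.h0.comp f.h0
  h1 := g.h1.comp f.h1
  h2 := g.h2.comp f.h2
  comm1 := by rw [FrameHom.comp_assoc, f.comm1, ← FrameHom.comp_assoc, g.comm1,
    FrameHom.comp_assoc]
  comm2 := by rw [FrameHom.comp_assoc, f.comm2, ← FrameHom.comp_assoc, g.comm2,
    FrameHom.comp_assoc]

/-- The identity biframe homomorphism. -/
def BiframeHom.id (L : Biframe) : BiframeHom L L where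
  h0 := FrameHom.id _
  h1 := FrameHom.id _
  h2 := FrameHom.id _
  comm1 := by rw [FrameHom.id_comp, FrameHom.comp_id]
  comm2 := by rw [FrameHom.id_comp, FrameHom.comp_id]

/-- Monomorphisms in the category `BiFrm`. -/
def BiframeHom.IsMono {L M : Biframe} (m : BiframeHom L M) : Prop :=
  ∀ (N : Biframe) (g h : BiframeHom N L), m.comp g = m.comp h → g = h

/-- Epimorphisms in the category `BiFrm`. -/
def BiframeHom.IsEpi {L M : Biframe} (f : BiframeHom L M) : Prop :=
  ∀ (N : Biframe) (g h : BiframeHom M N), g.comp f = h.comp f → g = h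

/-- Isomorphisms in the category `BiFrm`. -/
def BiframeHom.IsIso {L M : Biframe} (f : BiframeHom L M) : Prop :=
  ∃ g : BiframeHom M L, g.comp f = BiframeHom.id L ∧ f.comp g = BiframeHom.id M

/-- Extremal epimorphisms in the category `BiFrm`: epimorphisms `f` such that whenever
`f = m ∘ h` with `m` a monomorphism, `m` is an isomorphism. -/
def BiframeHom.IsExtremalEpi {L M : Biframe} (f : BiframeHom L M) : Prop :=
  f.IsEpi ∧ ∀ (N : Biframe) (h : BiframeHom L N) (m : BiframeHom N M),
    m.IsMono → f = m.comp h → m.IsIso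

/-- The underlying frame homomorphism `f₀` of the biframe homomorphism `f` is the pushout of
`f₁ ⊕ f₂` along `q_L` in `Frm`: for any presentation of the coproducts `L₁ ⊕ L₂` and
`M₁ ⊕ M₂` with the canonical quotient maps `q_L`, `q_M`, and the induced map
`F = f₁ ⊕ f₂` between them, the square `(F, q_L, f₀, q_M)` is a pushout square. -/
def BiframeHom.IsCanonicalPushout {L M : Biframe} (f : BiframeHom L M) : Prop :=
  ∀ (K : Type) [Order.Frame K], ∀ (i1 : FrameHom L.L1 K) (i2 : FrameHom L.L2 K),
    IsCoprod i1 i2 →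
    ∀ qL : FrameHom K L.L0, qL.comp i1 = L.e1 → qL.comp i2 = L.e2 →
    ∀ (K' : Type) [Order.Frame K'], ∀ (j1 : FrameHom M.L1 K') (j2 : FrameHom M.L2 K'),
      IsCoprod j1 j2 →
      ∀ qM : FrameHom K' M.L0, qM.comp j1 = M.e1 → qM.comp j2 = M.e2 →
      ∀ F : FrameHom K K', F.comp i1 = j1.comp f.h1 → F.comp i2 = j2.comp f.h2 →
        IsPushoutSquare F qL f.h0 qM

/-!
Both directions compare `f` with factorizations `f = m ∘ r` in which `m` has injective
components; these are exactly the monomorphisms of biframes, as one sees by testing against the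
free biframe on one generator in one component.

If `f` is an extremal epimorphism, factoring it through the sub-biframe of `M` generated by the
images of `f₁` and `f₂` shows that `f₁` and `f₂` are onto, and factoring it through the
sub-biframe of `M₀ × Q` generated by the graphs of `w₁ : M₁ → Q` and `w₂ : M₂ → Q` produces the
map `M₀ → Q` required by the pushout property. Conversely, if `f₁`, `f₂` are onto and `f₀` is a
pushout, then a monomorphism `m` through which `f` factors has bijective components, and the
pushout property provides a left inverse of `m₀`.

To pass between the pushout property and its coproduct-free form one needs some coproduct of
frames; we use the frame of C-ideals of `A × B`, the fixed points of a nucleus on the lower sets.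
-/

open Order

namespace LowerSet

theorem frameHom_ext {α Q : Type*} [Preorder α] [Frame Q] {f g : FrameHom (LowerSet α) Q}
    (h : ∀ p, f (Iic p) = g (Iic p)) : f = g := by
  ext U
  rw [← giLowerClosureCoe.l_u_eq U, ← iSup_Iic, map_iSup₂, map_iSup₂]
  simp only [h]

theorem mem_himp_iff {α : Type*} [Preorder α] {V Z : LowerSet α} {p : α} :
    p ∈ V ⇨ Z ↔ ∀ q ≤ p, q ∈ V → q ∈ Z := by
  rw [← Iic_le, le_himp_iff]
  exact ⟨fun h q hqp hq => h ⟨hqp, hq⟩, fun h q hq => h q hq.1 hq.2⟩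

variable {α Q : Type*} [SemilatticeInf α] [OrderTop α] [Frame Q]

/-- `LowerSet α` is the free frame on the meet-semilattice `α`. -/
def lift (ρ : InfTopHom α Q) : FrameHom (LowerSet α) Q where
  toFun U := ⨆ p ∈ U, ρ p
  map_inf' U V := by
    refine le_antisymm (le_inf (biSup_mono fun p hp => hp.1) (biSup_mono fun p hp => hp.2)) ?_
    simp only [iSup_inf_eq, inf_iSup_eq, iSup_le_iff]
    intro q hq p hp
    rw [← map_inf]
    exact le_iSup₂_of_le (p ⊓ q) ⟨U.lower inf_le_left hp, V.lower inf_le_right hq⟩ le_rfl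
  map_top' := top_le_iff.1 (le_iSup₂_of_le ⊤ trivial (map_top ρ).ge)
  map_sSup' 𝒰 := by
    simp only [sSup_image, mem_sSup_iff, iSup_exists, iSup_and]
    rw [iSup_comm]
    exact iSup_congr fun U => iSup_comm

theorem lift_Iic (ρ : InfTopHom α Q) (p : α) : lift ρ (Iic p) = ρ p :=
  le_antisymm (iSup₂_le fun _ hq => OrderHomClass.mono ρ hq) (le_iSup₂_of_le p le_rfl le_rfl)

end LowerSet

def Nucleus.liftFrameHom {X Q : Type*} [Frame X] [Frame Q] (n : Nucleus X) (φ : FrameHom X Q)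
    (hφ : ∀ x, φ (n x) = φ x) : FrameHom (Set.range n) Q where
  toFun x := φ x
  map_inf' x y := by rw [n.giRestrict.gc.u_inf, InfHomClass.map_inf]
  map_top' := by rw [n.giRestrict.gc.u_top, map_top]
  map_sSup' T := by
    have hT : sSup T = n.restrict (sSup (Subtype.val '' T)) := by
      rw [map_sSup, Set.image_image]
      simp only [n.giRestrict.l_u_eq, Set.image_id']
    show φ ↑(sSup T) = _
    rw [hT]
    show φ (n _) = _
    rw [hφ, map_sSup, Set.image_image]

namespace FrameHom

variable {X Y Z : Type*} [CompleteLattice X] [CompleteLattice Y] [CompleteLattice Z]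

def fst : FrameHom (Y × Z) Y where
  toFun := Prod.fst
  map_inf' _ _ := rfl
  map_top' := rfl
  map_sSup' := Prod.fst_sSup

def snd : FrameHom (Y × Z) Z where
  toFun := Prod.snd
  map_inf' _ _ := rfl
  map_top' := rfl
  map_sSup' := Prod.snd_sSup

def prod (f : FrameHom X Y) (g : FrameHom X Z) : FrameHom X (Y × Z) where
  toFun x := (f x, g x)
  map_inf' a b := Prod.ext (map_inf f a b) (map_inf g a b)
  map_top' := Prod.ext (map_top f) (map_top g)
  map_sSup' s := Prod.ext (by rw [Prod.fst_sSup, map_sSup f, Set.image_image])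
    (by rw [Prod.snd_sSup, map_sSup g, Set.image_image])

noncomputable def orderIsoOfBijective (f : FrameHom X Y) (hf : Function.Bijective f) : X ≃o Y :=
  .ofSurjective (.ofMapLEIff f fun a b => by
    rw [← inf_eq_left, ← map_inf, hf.1.eq_iff, inf_eq_left]) hf.2

@[simp] theorem apply_orderIsoOfBijective_symm (f : FrameHom X Y) (hf : Function.Bijective f)
    (y : Y) : f ((f.orderIsoOfBijective hf).symm y) = y :=
  (f.orderIsoOfBijective hf).apply_symm_apply y

@[simp] theorem orderIsoOfBijective_symm_apply (f : FrameHom X Y) (hf : Function.Bijective f)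
    (x : X) : (f.orderIsoOfBijective hf).symm (f x) = x :=
  (f.orderIsoOfBijective hf).symm_apply_apply x

variable {A B Q : Type*} [Frame A] [Frame B] [Frame Q]

def rect (h1 : FrameHom A Q) (h2 : FrameHom B Q) : InfTopHom (A × B) Q where
  toFun p := h1 p.1 ⊓ h2 p.2
  map_inf' p q := by simp only [Prod.fst_inf, Prod.snd_inf, map_inf, inf_inf_inf_comm]
  map_top' := by simp

theorem rect_mk_top (h1 : FrameHom A Q) (h2 : FrameHom B Q) (a : A) : h1.rect h2 (a, ⊤) = h1 a :=
  (congrArg _ (map_top h2)).trans (inf_top_eq _)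

theorem rect_top_mk (h1 : FrameHom A Q) (h2 : FrameHom B Q) (b : B) : h1.rect h2 (⊤, b) = h2 b :=
  (congrArg (· ⊓ h2 b) (map_top h1)).trans (top_inf_eq _)

end FrameHom

structure Subframe (X : Type*) [Frame X] where
  carrier : Set X
  sSup_mem' : ∀ s ⊆ carrier, sSup s ∈ carrier
  inf_mem' : ∀ ⦃a b⦄, a ∈ carrier → b ∈ carrier → a ⊓ b ∈ carrier
  top_mem' : ⊤ ∈ carrier

namespace Subframe

variable {X Y : Type*} [Frame X] [Frame Y]

instance : SetLike (Subframe X) X where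
  coe := carrier
  coe_injective S T h := by cases S; cases T; congr

variable (S : Subframe X)

theorem sSup_mem {s : Set X} (hs : s ⊆ S) : sSup s ∈ S := S.sSup_mem' s hs

theorem inf_mem {a b : X} (ha : a ∈ S) (hb : b ∈ S) : a ⊓ b ∈ S := S.inf_mem' ha hb

theorem top_mem : ⊤ ∈ S := S.top_mem'

instance : SupSet S where
  sSup T := ⟨sSup (Subtype.val '' T), S.sSup_mem (by rintro _ ⟨x, -, rfl⟩; exact x.2)⟩

theorem coe_sSup (T : Set S) : ((sSup T : S) : X) = sSup (Subtype.val '' T) := rfl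

instance : CompleteLattice S :=
  { completeLatticeOfSup S fun T =>
      ⟨fun x hx => (le_sSup (Set.mem_image_of_mem Subtype.val hx) : (x : X) ≤ _),
        fun y hy => (sSup_le (by rintro _ ⟨x, hx, rfl⟩; exact hy hx) : _ ≤ (y : X))⟩ with
    inf := fun x y => ⟨x ⊓ y, S.inf_mem x.2 y.2⟩
    inf_le_left := fun _ _ => inf_le_left (a := (_ : X))
    inf_le_right := fun _ _ => inf_le_right (a := (_ : X))
    le_inf := fun _ _ _ => le_inf (a := (_ : X))
    top := ⟨⊤, S.top_mem⟩
    le_top := fun _ => le_top (a := (_ : X)) }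

instance : Frame S := .ofMinimalAxioms ⟨fun a T => by
  rw [← sSup_image]
  show (a : X) ⊓ sSup (Subtype.val '' T) ≤ sSup (Subtype.val '' ((a ⊓ ·) '' T))
  rw [inf_sSup_eq, Set.image_image]
  exact iSup₂_le fun _ ⟨b, hb, hbx⟩ => hbx ▸ le_sSup ⟨b, hb, rfl⟩⟩

def incl : FrameHom S X where
  toFun := Subtype.val
  map_inf' _ _ := rfl
  map_top' := rfl
  map_sSup' _ := rfl

theorem incl_injective : Function.Injective S.incl := Subtype.val_injective

def codRestrict (f : FrameHom Y X) (h : ∀ y, f y ∈ S) : FrameHom Y S where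
  toFun y := ⟨f y, h y⟩
  map_inf' a b := Subtype.ext (map_inf f a b)
  map_top' := Subtype.ext (map_top f)
  map_sSup' s := Subtype.ext <| by
    show f (sSup s) = sSup (Subtype.val '' _)
    rw [map_sSup, Set.image_image]

def comap (f : FrameHom Y X) (T : Subframe X) : Subframe Y where
  carrier := f ⁻¹' T
  sSup_mem' s hs := by
    rw [Set.mem_preimage, map_sSup]
    exact T.sSup_mem (Set.image_subset_iff.2 hs)
  inf_mem' a b ha hb := by
    rw [Set.mem_preimage, map_inf]
    exact T.inf_mem ha hb
  top_mem' := by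
    rw [Set.mem_preimage, map_top]
    exact T.top_mem

def range (f : FrameHom Y X) : Subframe X where
  carrier := Set.range f
  sSup_mem' s hs := by
    rw [← Set.image_preimage_eq_of_subset hs, ← map_sSup]
    exact Set.mem_range_self _
  inf_mem' := by
    rintro _ _ ⟨a, rfl⟩ ⟨b, rfl⟩
    exact ⟨a ⊓ b, map_inf f a b⟩
  top_mem' := ⟨⊤, map_top f⟩

section Joins

variable {α : Type*} [SemilatticeInf α] [OrderTop α] (ρ : InfTopHom α X)

def joins : Subframe X where
  carrier := {x | ∃ A : Set α, x = sSup (ρ '' A)}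
  sSup_mem' s hs := by
    have hs' : ∀ x ∈ s, ∃ A : Set α, x = sSup (ρ '' A) := hs
    choose! A hA using hs'
    refine ⟨⋃ x ∈ s, A x, ?_⟩
    rw [sSup_eq_iSup, Set.image_iUnion₂, sSup_iUnion]
    refine iSup_congr fun x => ?_
    rw [sSup_iUnion]
    exact iSup_congr (hA x)
  inf_mem' := by
    rintro _ _ ⟨A, rfl⟩ ⟨B, rfl⟩
    refine ⟨(fun p => p.1 ⊓ p.2) '' A ×ˢ B, ?_⟩
    simp only [sSup_image, Set.image_image, biSup_inf_biSup, map_inf]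
  top_mem' := ⟨{⊤}, by rw [Set.image_singleton, sSup_singleton, map_top]⟩

theorem apply_mem_joins (a : α) : ρ a ∈ joins ρ :=
  ⟨{a}, by rw [Set.image_singleton, sSup_singleton]⟩

end Joins

theorem left_mem_joins_rect {X1 X2 : Type*} [Frame X1] [Frame X2] (g1 : FrameHom X1 X)
    (g2 : FrameHom X2 X) (a : X1) : g1 a ∈ joins (g1.rect g2) :=
  g1.rect_mk_top g2 a ▸ apply_mem_joins _ _

theorem right_mem_joins_rect {X1 X2 : Type*} [Frame X1] [Frame X2] (g1 : FrameHom X1 X)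
    (g2 : FrameHom X2 X) (b : X2) : g2 b ∈ joins (g1.rect g2) :=
  g1.rect_top_mk g2 b ▸ apply_mem_joins _ _

end Subframe

section FrameCoprod

variable {A B : Type*} [Frame A] [Frame B]

def IsCIdeal (U : LowerSet (A × B)) : Prop :=
  (∀ (S : Set A) (b : B), (∀ a ∈ S, (a, b) ∈ U) → (sSup S, b) ∈ U) ∧
    ∀ (a : A) (T : Set B), (∀ b ∈ T, (a, b) ∈ U) → (a, sSup T) ∈ U

theorem isCIdeal_sInf {𝒰 : Set (LowerSet (A × B))} (h : ∀ U ∈ 𝒰, IsCIdeal U) :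
    IsCIdeal (sInf 𝒰) := by
  simp only [IsCIdeal, LowerSet.mem_sInf_iff]
  exact ⟨fun S b hS U hU => (h U hU).1 S b fun a ha => hS a ha U hU,
    fun a T hT U hU => (h U hU).2 a T fun b hb => hT b hb U hU⟩

theorem IsCIdeal.himp {Z : LowerSet (A × B)} (hZ : IsCIdeal Z) (V : LowerSet (A × B)) :
    IsCIdeal (V ⇨ Z) := by
  simp only [IsCIdeal, LowerSet.mem_himp_iff, Prod.forall, Prod.mk_le_mk]
  constructor
  · intro S b hS x y ⟨hx, hy⟩ hxy
    have key : ∀ a ∈ (x ⊓ ·) '' S, (a, y) ∈ Z := by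
      rintro _ ⟨a, ha, rfl⟩
      exact hS a ha _ _ ⟨inf_le_right, hy⟩
        (V.lower (show (x ⊓ a, y) ≤ (x, y) from ⟨inf_le_left, le_rfl⟩) hxy)
    simpa [sSup_image, ← inf_sSup_eq, inf_eq_left.2 hx] using hZ.1 _ y key
  · intro a T hT x y ⟨hx, hy⟩ hxy
    have key : ∀ b ∈ (y ⊓ ·) '' T, (x, b) ∈ Z := by
      rintro _ ⟨b, hb, rfl⟩
      exact hT b hb _ _ ⟨hx, inf_le_right⟩
        (V.lower (show (x, y ⊓ b) ≤ (x, y) from ⟨le_rfl, inf_le_left⟩) hxy)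
    simpa [sSup_image, ← inf_sSup_eq, inf_eq_left.2 hy] using hZ.2 x _ key

variable (A B) in
def cIdealClosure : ClosureOperator (LowerSet (A × B)) :=
  ClosureOperator.ofCompletePred IsCIdeal fun _ => isCIdeal_sInf

variable (A B) in
def cIdealNucleus : Nucleus (LowerSet (A × B)) where
  toFun := cIdealClosure A B
  map_inf' U V := by
    set c := cIdealClosure A B
    refine le_antisymm (c.monotone.map_inf_le U V) ?_
    -- C-ideals are stable under `V ⇨ ·`, so `c U ⊓ c V ≤ c (U ⊓ V)` by adjunction, twice.
    have hZ : IsCIdeal (c (U ⊓ V)) := c.isClosed_closure _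
    have hU : c U ≤ V ⇨ c (U ⊓ V) := c.closure_min (le_himp_iff.2 (c.le_closure _)) (hZ.himp V)
    have hV : c V ≤ c U ⇨ c (U ⊓ V) :=
      c.closure_min (le_himp_iff.2 (inf_comm V (c U) ▸ le_himp_iff.1 hU)) (hZ.himp _)
    exact inf_comm (c V) (c U) ▸ le_himp_iff.1 hV
  idempotent' U := ((cIdealClosure A B).idempotent U).le
  le_apply' := (cIdealClosure A B).le_closure

abbrev FrameCoprod (A B : Type*) [Frame A] [Frame B] : Type _ := Set.range (cIdealNucleus A B)

namespace FrameCoprod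

variable (A B) in
def quot : FrameHom (LowerSet (A × B)) (FrameCoprod A B) := (cIdealNucleus A B).restrict

theorem quot_Iic_le {p : A × B} {U : LowerSet (A × B)} (hp : p ∈ cIdealClosure A B U) :
    quot A B (LowerSet.Iic p) ≤ quot A B U :=
  (cIdealClosure A B).closure_min (LowerSet.Iic_le.2 hp) ((cIdealClosure A B).isClosed_closure U)

theorem quot_Iic_sSup_left (S : Set A) (b : B) :
    quot A B (LowerSet.Iic (sSup S, b)) = ⨆ a ∈ S, quot A B (LowerSet.Iic (a, b)) := by
  rw [← map_iSup₂]
  refine le_antisymm (quot_Iic_le (((cIdealClosure A B).isClosed_closure _).1 S b fun a ha => ?_))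
    (OrderHomClass.mono _ (iSup₂_le fun a ha => LowerSet.Iic_le.2 ⟨le_sSup ha, le_rfl⟩))
  exact (cIdealClosure A B).le_closure _
    (LowerSet.mem_iSup₂_iff.2 ⟨a, ha, LowerSet.mem_Iic_iff.2 le_rfl⟩)

theorem quot_Iic_sSup_right (a : A) (T : Set B) :
    quot A B (LowerSet.Iic (a, sSup T)) = ⨆ b ∈ T, quot A B (LowerSet.Iic (a, b)) := by
  rw [← map_iSup₂]
  refine le_antisymm (quot_Iic_le (((cIdealClosure A B).isClosed_closure _).2 a T fun b hb => ?_))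
    (OrderHomClass.mono _ (iSup₂_le fun b hb => LowerSet.Iic_le.2 ⟨le_rfl, le_sSup hb⟩))
  exact (cIdealClosure A B).le_closure _
    (LowerSet.mem_iSup₂_iff.2 ⟨b, hb, LowerSet.mem_Iic_iff.2 le_rfl⟩)

def inl : FrameHom A (FrameCoprod A B) where
  toFun a := quot A B (LowerSet.Iic (a, ⊤))
  map_inf' a a' := by rw [← map_inf, ← LowerSet.Iic_inf, Prod.mk_inf_mk, inf_idem]
  map_top' := by rw [← map_top (quot A B), ← LowerSet.Iic_top]; rfl
  map_sSup' S := by rw [quot_Iic_sSup_left, sSup_image]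

def inr : FrameHom B (FrameCoprod A B) where
  toFun b := quot A B (LowerSet.Iic (⊤, b))
  map_inf' b b' := by rw [← map_inf, ← LowerSet.Iic_inf, Prod.mk_inf_mk, inf_idem]
  map_top' := by rw [← map_top (quot A B), ← LowerSet.Iic_top]; rfl
  map_sSup' T := by rw [quot_Iic_sSup_right, sSup_image]

theorem inl_inf_inr (p : A × B) : inl p.1 ⊓ inr p.2 = quot A B (LowerSet.Iic p) := by
  show quot A B _ ⊓ quot A B _ = _
  rw [← map_inf, ← LowerSet.Iic_inf, Prod.mk_inf_mk, inf_top_eq, top_inf_eq]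

variable {Q : Type*} [Frame Q]

theorem lift_rect_cIdealClosure (h1 : FrameHom A Q) (h2 : FrameHom B Q) (U : LowerSet (A × B)) :
    LowerSet.lift (h1.rect h2) (cIdealClosure A B U) = LowerSet.lift (h1.rect h2) U := by
  set D := LowerSet.lift (h1.rect h2)
  refine le_antisymm ?_ (OrderHomClass.mono D ((cIdealClosure A B).le_closure U))
  let W : LowerSet (A × B) :=
    ⟨{p | h1.rect h2 p ≤ D U}, fun p q hqp hp => (OrderHomClass.mono (h1.rect h2) hqp).trans hp⟩
  have hW : IsCIdeal W := by
    refine ⟨fun S b hS => ?_, fun a T hT => ?_⟩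
    · show h1 (sSup S) ⊓ h2 b ≤ D U
      rw [map_sSup, sSup_image, iSup₂_inf_eq]
      exact iSup₂_le hS
    · show h1 a ⊓ h2 (sSup T) ≤ D U
      rw [map_sSup, sSup_image, inf_iSup₂_eq]
      exact iSup₂_le hT
  have hUW : cIdealClosure A B U ≤ W :=
    (cIdealClosure A B).closure_min (fun p hp => le_iSup₂_of_le p hp le_rfl) hW
  exact iSup₂_le fun p hp => hUW hp

def desc (h1 : FrameHom A Q) (h2 : FrameHom B Q) : FrameHom (FrameCoprod A B) Q :=
  (cIdealNucleus A B).liftFrameHom (LowerSet.lift (h1.rect h2)) (lift_rect_cIdealClosure h1 h2)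

theorem desc_quot (h1 : FrameHom A Q) (h2 : FrameHom B Q) (U : LowerSet (A × B)) :
    desc h1 h2 (quot A B U) = LowerSet.lift (h1.rect h2) U :=
  lift_rect_cIdealClosure h1 h2 U

theorem desc_comp_inl (h1 : FrameHom A Q) (h2 : FrameHom B Q) : (desc h1 h2).comp inl = h1 := by
  ext a
  show desc h1 h2 (quot A B _) = _
  rw [desc_quot, LowerSet.lift_Iic, FrameHom.rect_mk_top]

theorem desc_comp_inr (h1 : FrameHom A Q) (h2 : FrameHom B Q) : (desc h1 h2).comp inr = h2 := by
  ext b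
  show desc h1 h2 (quot A B _) = _
  rw [desc_quot, LowerSet.lift_Iic, FrameHom.rect_top_mk]

theorem hom_ext {k k' : FrameHom (FrameCoprod A B) Q} (h1 : k.comp inl = k'.comp inl)
    (h2 : k.comp inr = k'.comp inr) : k = k' := by
  have hquot : k.comp (quot A B) = k'.comp (quot A B) := LowerSet.frameHom_ext fun p => by
    simp only [FrameHom.comp_apply, ← inl_inf_inr, map_inf]
    rw [← FrameHom.comp_apply k, h1, ← FrameHom.comp_apply k, h2]
    rfl
  ext x
  obtain ⟨U, rfl⟩ := (cIdealNucleus A B).giRestrict.l_surjective x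
  exact DFunLike.congr_fun hquot U

theorem isCoprod {A B : Type} [Frame A] [Frame B] :
    IsCoprod (inl : FrameHom A (FrameCoprod A B)) inr := fun _ _ h1 h2 =>
  ⟨desc h1 h2, ⟨desc_comp_inl h1 h2, desc_comp_inr h1 h2⟩, fun _ ⟨hk1, hk2⟩ =>
    hom_ext (hk1.trans (desc_comp_inl h1 h2).symm) (hk2.trans (desc_comp_inr h1 h2).symm)⟩

end FrameCoprod

end FrameCoprod

theorem IsCoprod.hom_ext {A B K Q : Type} [Frame A] [Frame B] [Frame K] [Frame Q]
    {i1 : FrameHom A K} {i2 : FrameHom B K} (h : IsCoprod i1 i2) {k k' : FrameHom K Q}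
    (h1 : k.comp i1 = k'.comp i1) (h2 : k.comp i2 = k'.comp i2) : k = k' :=
  (h Q (k.comp i1) (k.comp i2)).unique ⟨rfl, rfl⟩ ⟨h1.symm, h2.symm⟩

namespace Biframe

variable (L : Biframe)

theorem mem_of_forall_e1_e2_mem {S : Subframe L.L0} (h1 : ∀ a, L.e1 a ∈ S)
    (h2 : ∀ b, L.e2 b ∈ S) (x : L.L0) : x ∈ S := by
  obtain ⟨A, rfl⟩ := L.gen x
  refine S.sSup_mem ?_
  rintro _ ⟨p, -, rfl⟩
  exact S.inf_mem (h1 p.1) (h2 p.2)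

theorem frameHom_ext {Q : Type*} [Frame Q] {k k' : FrameHom L.L0 Q}
    (h1 : k.comp L.e1 = k'.comp L.e1) (h2 : k.comp L.e2 = k'.comp L.e2) : k = k' := by
  ext x
  obtain ⟨A, rfl⟩ := L.gen x
  simp only [map_sSup, Set.image_image, map_inf]
  congr! 3 with p
  exacts [DFunLike.congr_fun h1 p.1, DFunLike.congr_fun h2 p.2]

def swap : Biframe where
  L0 := L.L0
  L1 := L.L2
  L2 := L.L1
  e1 := L.e2
  e2 := L.e1
  inj1 := L.inj2
  inj2 := L.inj1
  gen x := by
    obtain ⟨A, hA⟩ := L.gen x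
    refine ⟨Prod.swap '' A, hA.trans ?_⟩
    simp only [Set.image_image, Prod.fst_swap, Prod.snd_swap, inf_comm]

end Biframe

namespace BiframeHom

variable {L M N : Biframe}

theorem h0_e1 (f : BiframeHom L M) (a : L.L1) : f.h0 (L.e1 a) = M.e1 (f.h1 a) :=
  DFunLike.congr_fun f.comm1 a

theorem h0_e2 (f : BiframeHom L M) (b : L.L2) : f.h0 (L.e2 b) = M.e2 (f.h2 b) :=
  DFunLike.congr_fun f.comm2 b

theorem ext_of_h1_h2 {f g : BiframeHom L M} (h1 : f.h1 = g.h1) (h2 : f.h2 = g.h2) : f = g :=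
  BiframeHom.ext (L.frameHom_ext (by rw [f.comm1, g.comm1, h1]) (by rw [f.comm2, g.comm2, h2]))
    h1 h2

def swap (f : BiframeHom L M) : BiframeHom L.swap M.swap := ⟨f.h0, f.h2, f.h1, f.comm2, f.comm1⟩

theorem IsMono.swap {m : BiframeHom N M} (hm : m.IsMono) : m.swap.IsMono := fun P g h hgh =>
  congrArg BiframeHom.swap (hm P.swap g.swap h.swap (congrArg BiframeHom.swap hgh))

theorem h0_surjective (f : BiframeHom L M) (s1 : Function.Surjective f.h1)
    (s2 : Function.Surjective f.h2) : Function.Surjective f.h0 :=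
  M.mem_of_forall_e1_e2_mem (S := Subframe.range f.h0)
    (fun b => by obtain ⟨a, rfl⟩ := s1 b; exact ⟨L.e1 a, f.h0_e1 a⟩)
    (fun b => by obtain ⟨a, rfl⟩ := s2 b; exact ⟨L.e2 a, f.h0_e2 a⟩)

theorem isEpi_of_surjective (f : BiframeHom L M) (s1 : Function.Surjective f.h1)
    (s2 : Function.Surjective f.h2) : f.IsEpi := fun _ _ _ h =>
  ext_of_h1_h2
    (FrameHom.ext fun b => by obtain ⟨a, rfl⟩ := s1 b; exact DFunLike.congr_fun (congrArg h1 h) a)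
    (FrameHom.ext fun b => by obtain ⟨a, rfl⟩ := s2 b; exact DFunLike.congr_fun (congrArg h2 h) a)

theorem isMono_of_injective (m : BiframeHom N M) (i1 : Function.Injective m.h1)
    (i2 : Function.Injective m.h2) : m.IsMono := fun _ _ _ h =>
  ext_of_h1_h2 (FrameHom.ext fun a => i1 (DFunLike.congr_fun (congrArg h1 h) a))
    (FrameHom.ext fun b => i2 (DFunLike.congr_fun (congrArg h2 h) b))

theorem isIso_of_bijective (m : BiframeHom N M) (b0 : Function.Bijective m.h0)
    (b1 : Function.Bijective m.h1) (b2 : Function.Bijective m.h2) : m.IsIso := by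
  refine ⟨⟨(m.h0.orderIsoOfBijective b0).symm, (m.h1.orderIsoOfBijective b1).symm,
    (m.h2.orderIsoOfBijective b2).symm, ?_, ?_⟩, ?_, ?_⟩
  · ext b
    apply b0.1
    simp [h0_e1]
  · ext b
    apply b0.1
    simp [h0_e2]
  · ext <;> simp [comp, BiframeHom.id]
  · ext <;> simp [comp, BiframeHom.id]

end BiframeHom

noncomputable section FreeBiframe

namespace LowerSet

variable {X : Type*} [Frame X]

/-- `LowerSet Bool` is the free frame on the generator `Iic false`. -/
def boolLift (a : X) : FrameHom (LowerSet Bool) X :=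
  lift
    { toFun := fun b => cond b ⊤ a
      map_inf' := fun b c => by cases b <;> cases c <;> simp
      map_top' := rfl }

theorem boolLift_Iic_false (a : X) : boolLift a (Iic false) = a :=
  lift_Iic _ false

theorem frameHom_bool_ext {f g : FrameHom (LowerSet Bool) X}
    (h : f (Iic false) = g (Iic false)) : f = g :=
  frameHom_ext fun
    | false => h
    | true => by rw [show Iic true = ⊤ from Iic_top, map_top, map_top]

theorem frameHom_unit_ext (f g : FrameHom (LowerSet Unit) X) : f = g :=
  frameHom_ext fun _ => by rw [show Iic () = ⊤ from Iic_top, map_top, map_top]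

variable (X) in
def unitLift : FrameHom (LowerSet Unit) X := lift ⊤

theorem unitLift_injective : Function.Injective (unitLift (LowerSet Bool)) := by
  have key (W : LowerSet Unit) : () ∈ W ↔ true ∈ unitLift (LowerSet Bool) W := by
    show _ ↔ true ∈ ⨆ p ∈ W, (⊤ : LowerSet Bool)
    simp
  intro U V h
  ext ⟨⟩
  exact (key U).trans (h ▸ key V).symm

end LowerSet

/-- The free biframe on one generator of the first component. -/
def Biframe.freeLeft : Biframe where
  L0 := LowerSet Bool
  L1 := LowerSet Bool
  L2 := LowerSet Unit
  e1 := FrameHom.id _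
  e2 := LowerSet.unitLift _
  inj1 := Function.injective_id
  inj2 := LowerSet.unitLift_injective
  gen x := ⟨{(x, ⊤)}, by rw [Set.image_singleton, sSup_singleton, map_top, inf_top_eq]; rfl⟩

namespace BiframeHom

variable {M N : Biframe}

def freeLeftLift (a : N.L1) : BiframeHom Biframe.freeLeft N where
  h0 := N.e1.comp (LowerSet.boolLift a)
  h1 := LowerSet.boolLift a
  h2 := LowerSet.unitLift N.L2
  comm1 := rfl
  comm2 := LowerSet.frameHom_unit_ext _ _

theorem freeLeftLift_h1_Iic_false (a : N.L1) :
    (freeLeftLift a).h1 (LowerSet.Iic false : Biframe.freeLeft.L1) = a :=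
  LowerSet.boolLift_Iic_false a

theorem freeLeft_ext {g g' : BiframeHom Biframe.freeLeft N}
    (h : g.h1 (LowerSet.Iic false : Biframe.freeLeft.L1) = g'.h1 (LowerSet.Iic false)) :
    g = g' :=
  ext_of_h1_h2 (LowerSet.frameHom_bool_ext h) (LowerSet.frameHom_unit_ext _ _)

theorem injective_h1_of_isMono {m : BiframeHom N M} (hm : m.IsMono) :
    Function.Injective m.h1 := fun a b hab => by
  have h := hm _ (freeLeftLift a) (freeLeftLift b) <| freeLeft_ext <| by
    show m.h1 ((freeLeftLift a).h1 _) = m.h1 ((freeLeftLift b).h1 _)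
    rwa [freeLeftLift_h1_Iic_false, freeLeftLift_h1_Iic_false]
  rw [← freeLeftLift_h1_Iic_false a, ← freeLeftLift_h1_Iic_false b, h]

theorem injective_h2_of_isMono {m : BiframeHom N M} (hm : m.IsMono) :
    Function.Injective m.h2 :=
  injective_h1_of_isMono hm.swap

end BiframeHom

end FreeBiframe

section Generate

variable {X X1 X2 : Type} [Frame X] [Frame X1] [Frame X2] {g1 : FrameHom X1 X}
  {g2 : FrameHom X2 X} (hg1 : Function.Injective g1) (hg2 : Function.Injective g2)

theorem Biframe.apply_mem_joins_rect {L : Biframe} {φ : FrameHom L.L0 X}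
    {φ1 : FrameHom L.L1 X1} {φ2 : FrameHom L.L2 X2} (h1 : φ.comp L.e1 = g1.comp φ1)
    (h2 : φ.comp L.e2 = g2.comp φ2) (x : L.L0) : φ x ∈ Subframe.joins (g1.rect g2) :=
  L.mem_of_forall_e1_e2_mem (S := (Subframe.joins (g1.rect g2)).comap φ)
    (fun a => show φ (L.e1 a) ∈ Subframe.joins (g1.rect g2) by
      rw [← FrameHom.comp_apply, h1]; exact Subframe.left_mem_joins_rect g1 g2 (φ1 a))
    (fun b => show φ (L.e2 b) ∈ Subframe.joins (g1.rect g2) by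
      rw [← FrameHom.comp_apply, h2]; exact Subframe.right_mem_joins_rect g1 g2 (φ2 b))
    x

def Biframe.generate : Biframe where
  L0 := Subframe.joins (g1.rect g2)
  L1 := X1
  L2 := X2
  e1 := Subframe.codRestrict _ g1 (Subframe.left_mem_joins_rect g1 g2)
  e2 := Subframe.codRestrict _ g2 (Subframe.right_mem_joins_rect g1 g2)
  inj1 _ _ h := hg1 (congrArg Subtype.val h)
  inj2 _ _ h := hg2 (congrArg Subtype.val h)
  gen x := by
    obtain ⟨A, hA⟩ := x.2
    exact ⟨A, Subtype.ext (hA.trans (by rw [Subframe.coe_sSup, Set.image_image]; rfl))⟩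

def BiframeHom.toGenerate {L : Biframe} (φ : FrameHom L.L0 X) (φ1 : FrameHom L.L1 X1)
    (φ2 : FrameHom L.L2 X2) (h1 : φ.comp L.e1 = g1.comp φ1) (h2 : φ.comp L.e2 = g2.comp φ2) :
    BiframeHom L (Biframe.generate hg1 hg2) where
  h0 := Subframe.codRestrict _ φ (L.apply_mem_joins_rect h1 h2)
  h1 := φ1
  h2 := φ2
  comm1 := FrameHom.ext fun a => Subtype.ext (DFunLike.congr_fun h1 a)
  comm2 := FrameHom.ext fun b => Subtype.ext (DFunLike.congr_fun h2 b)

def BiframeHom.fromGenerate {M : Biframe} (ψ : FrameHom X M.L0) (ψ1 : FrameHom X1 M.L1)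
    (ψ2 : FrameHom X2 M.L2) (h1 : ψ.comp g1 = M.e1.comp ψ1) (h2 : ψ.comp g2 = M.e2.comp ψ2) :
    BiframeHom (Biframe.generate hg1 hg2) M where
  h0 := ψ.comp (Subframe.incl _)
  h1 := ψ1
  h2 := ψ2
  comm1 := FrameHom.ext fun a => DFunLike.congr_fun h1 a
  comm2 := FrameHom.ext fun b => DFunLike.congr_fun h2 b

end Generate

namespace BiframeHom

variable {L M : Biframe} {f : BiframeHom L M}

theorem IsExtremalEpi.surjective (hf : f.IsExtremalEpi) :
    Function.Surjective f.h1 ∧ Function.Surjective f.h2 := by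
  set R1 := Subframe.range f.h1
  set R2 := Subframe.range f.h2
  have hg1 : Function.Injective (M.e1.comp R1.incl) := M.inj1.comp R1.incl_injective
  have hg2 : Function.Injective (M.e2.comp R2.incl) := M.inj2.comp R2.incl_injective
  let r := toGenerate hg1 hg2 f.h0 (R1.codRestrict f.h1 fun a => ⟨a, rfl⟩)
    (R2.codRestrict f.h2 fun b => ⟨b, rfl⟩) f.comm1 f.comm2
  let m := fromGenerate hg1 hg2 (FrameHom.id M.L0) R1.incl R2.incl rfl rfl
  obtain ⟨g, -, hg⟩ := hf.2 _ r m (m.isMono_of_injective R1.incl_injective R2.incl_injective) rfl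
  refine ⟨fun b => ?_, fun b => ?_⟩
  · obtain ⟨a, ha⟩ := (g.h1 b).2
    exact ⟨a, ha.trans (DFunLike.congr_fun (congrArg BiframeHom.h1 hg) b)⟩
  · obtain ⟨a, ha⟩ := (g.h2 b).2
    exact ⟨a, ha.trans (DFunLike.congr_fun (congrArg BiframeHom.h2 hg) b)⟩

/-- `IsCanonicalPushout` with the coproducts `L₁ ⊕ L₂` and `M₁ ⊕ M₂` unfolded
(see `isCanonicalPushout_iff`). -/
def IsComponentPushout (f : BiframeHom L M) : Prop :=
  ∀ (Q : Type) [Frame Q] (w1 : FrameHom M.L1 Q) (w2 : FrameHom M.L2 Q) (v : FrameHom L.L0 Q),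
    v.comp L.e1 = w1.comp f.h1 → v.comp L.e2 = w2.comp f.h2 →
      ∃ k : FrameHom M.L0 Q, k.comp M.e1 = w1 ∧ k.comp M.e2 = w2 ∧ k.comp f.h0 = v

theorem IsExtremalEpi.isComponentPushout (hf : f.IsExtremalEpi) : f.IsComponentPushout := by
  intro Q _ w1 w2 v hv1 hv2
  have hg1 : Function.Injective (M.e1.prod w1) := fun a b h => M.inj1 (congrArg Prod.fst h)
  have hg2 : Function.Injective (M.e2.prod w2) := fun a b h => M.inj2 (congrArg Prod.fst h)
  let r := toGenerate hg1 hg2 (f.h0.prod v) f.h1 f.h2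
    (FrameHom.ext fun a => Prod.ext (f.h0_e1 a) (DFunLike.congr_fun hv1 a))
    (FrameHom.ext fun b => Prod.ext (f.h0_e2 b) (DFunLike.congr_fun hv2 b))
  let m := fromGenerate hg1 hg2 FrameHom.fst (FrameHom.id _) (FrameHom.id _) rfl rfl
  obtain ⟨g, hgm, hmg⟩ :=
    hf.2 _ r m (m.isMono_of_injective Function.injective_id Function.injective_id) rfl
  have hg1_id : g.h1 = FrameHom.id _ := congrArg BiframeHom.h1 hmg
  have hg2_id : g.h2 = FrameHom.id _ := congrArg BiframeHom.h2 hmg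
  refine ⟨FrameHom.snd.comp ((Subframe.incl _).comp g.h0), ?_, ?_, ?_⟩
  · ext b
    show (g.h0 (M.e1 b)).1.2 = w1 b
    rw [g.h0_e1, hg1_id]
    rfl
  · ext b
    show (g.h0 (M.e2 b)).1.2 = w2 b
    rw [g.h0_e2, hg2_id]
    rfl
  · ext x
    show (g.h0 (m.h0 (r.h0 x))).1.2 = v x
    rw [show g.h0 (m.h0 (r.h0 x)) = r.h0 x from DFunLike.congr_fun (congrArg h0 hgm) _]
    rfl

theorem IsComponentPushout.isCanonicalPushout (h : f.IsComponentPushout) :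
    f.IsCanonicalPushout := by
  intro K _ i1 i2 hK qL hqL1 hqL2 K' _ j1 j2 hK' qM hqM1 hqM2 F hF1 hF2
  refine ⟨hK.hom_ext ?_ ?_, fun Q _ u v huv => ?_⟩
  · rw [FrameHom.comp_assoc, hF1, ← FrameHom.comp_assoc, hqM1, FrameHom.comp_assoc, hqL1, f.comm1]
  · rw [FrameHom.comp_assoc, hF2, ← FrameHom.comp_assoc, hqM2, FrameHom.comp_assoc, hqL2, f.comm2]
  obtain ⟨k, hk1, hk2, hkv⟩ := h Q (u.comp j1) (u.comp j2) v
    (by rw [← hqL1, ← FrameHom.comp_assoc, ← huv, FrameHom.comp_assoc, hF1, FrameHom.comp_assoc])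
    (by rw [← hqL2, ← FrameHom.comp_assoc, ← huv, FrameHom.comp_assoc, hF2, FrameHom.comp_assoc])
  refine ⟨k, ⟨hK'.hom_ext ?_ ?_, hkv⟩, fun k' ⟨hk'u, _⟩ => M.frameHom_ext ?_ ?_⟩
  · rw [FrameHom.comp_assoc, hqM1, hk1]
  · rw [FrameHom.comp_assoc, hqM2, hk2]
  · rw [hk1, ← hqM1, ← FrameHom.comp_assoc, hk'u]
  · rw [hk2, ← hqM2, ← FrameHom.comp_assoc, hk'u]

theorem IsCanonicalPushout.isComponentPushout (h : f.IsCanonicalPushout) :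
    f.IsComponentPushout := by
  intro Q _ w1 w2 v hv1 hv2
  have hL := FrameCoprod.isCoprod (A := L.L1) (B := L.L2)
  have hM := FrameCoprod.isCoprod (A := M.L1) (B := M.L2)
  obtain ⟨qL, ⟨hqL1, hqL2⟩, -⟩ := hL _ L.e1 L.e2
  obtain ⟨qM, ⟨hqM1, hqM2⟩, -⟩ := hM _ M.e1 M.e2
  obtain ⟨F, ⟨hF1, hF2⟩, -⟩ := hL _ (FrameCoprod.inl.comp f.h1) (FrameCoprod.inr.comp f.h2)
  obtain ⟨u, ⟨hu1, hu2⟩, -⟩ := hM Q w1 w2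
  have huv : u.comp F = v.comp qL := hL.hom_ext
    (by rw [FrameHom.comp_assoc, hF1, ← FrameHom.comp_assoc, hu1, FrameHom.comp_assoc, hqL1, hv1])
    (by rw [FrameHom.comp_assoc, hF2, ← FrameHom.comp_assoc, hu2, FrameHom.comp_assoc, hqL2, hv2])
  obtain ⟨k, ⟨hku, hkv⟩, -⟩ :=
    (h _ _ _ hL qL hqL1 hqL2 _ _ _ hM qM hqM1 hqM2 F hF1 hF2).2 Q u v huv
  exact ⟨k, by rw [← hqM1, ← FrameHom.comp_assoc, hku, hu1],
    by rw [← hqM2, ← FrameHom.comp_assoc, hku, hu2], hkv⟩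

theorem isExtremalEpi_of_surjective_of_isComponentPushout (s1 : Function.Surjective f.h1)
    (s2 : Function.Surjective f.h2) (hpo : f.IsComponentPushout) : f.IsExtremalEpi := by
  refine ⟨f.isEpi_of_surjective s1 s2, fun N r m hm hfac => ?_⟩
  have hf1 : ⇑f.h1 = m.h1 ∘ r.h1 := congrArg (fun g : BiframeHom L M => ⇑g.h1) hfac
  have hf2 : ⇑f.h2 = m.h2 ∘ r.h2 := congrArg (fun g : BiframeHom L M => ⇑g.h2) hfac
  have b1 : Function.Bijective m.h1 := ⟨injective_h1_of_isMono hm, (hf1 ▸ s1).of_comp⟩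
  have b2 : Function.Bijective m.h2 := ⟨injective_h2_of_isMono hm, (hf2 ▸ s2).of_comp⟩
  have sr0 : Function.Surjective r.h0 := r.h0_surjective
    ((Function.Surjective.of_comp_iff' b1 _).1 (hf1 ▸ s1))
    ((Function.Surjective.of_comp_iff' b2 _).1 (hf2 ▸ s2))
  obtain ⟨k, -, -, hk⟩ := hpo N.L0
    (N.e1.comp (m.h1.orderIsoOfBijective b1).symm) (N.e2.comp (m.h2.orderIsoOfBijective b2).symm)
    r.h0 (FrameHom.ext fun a => by simp [hf1, r.h0_e1])
    (FrameHom.ext fun b => by simp [hf2, r.h0_e2])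
  have hkm : Function.LeftInverse k m.h0 := fun y => by
    obtain ⟨x, rfl⟩ := sr0 y
    exact (DFunLike.congr_fun (congrArg h0 hfac) x).symm ▸ DFunLike.congr_fun hk x
  exact m.isIso_of_bijective ⟨hkm.injective, m.h0_surjective b1.2 b2.2⟩ b1 b2

theorem isCanonicalPushout_iff : f.IsCanonicalPushout ↔ f.IsComponentPushout :=
  ⟨IsCanonicalPushout.isComponentPushout, IsComponentPushout.isCanonicalPushout⟩

end BiframeHom

/-- A biframe homomorphism `f : L → M` is an extremal epimorphism in `BiFrm` if and only if
both component restrictions `f₁` and `f₂` are surjective and the underlying frame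
homomorphism `f₀` is the pushout in `Frm` of `f₁ ⊕ f₂` along the canonical quotient map
`q_L : L₁ ⊕ L₂ → L₀`. -/
theorem biframe_extremalEpi_iff {L M : Biframe} (f : BiframeHom L M) :
    f.IsExtremalEpi ↔
      Function.Surjective f.h1 ∧ Function.Surjective f.h2 ∧ f.IsCanonicalPushout := by
  rw [BiframeHom.isCanonicalPushout_iff]
  exact ⟨fun hf => ⟨hf.surjective.1, hf.surjective.2, hf.isComponentPushout⟩,
    fun ⟨s1, s2, hpo⟩ => BiframeHom.isExtremalEpi_of_surjective_of_isComponentPushout s1 s2 hpo⟩
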